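/- arXiv:2508.05050 — 2 statements merged into one kernel-verified Lean document; each statement's English description precedes it below -/
import Mathlib

section
/- Let E = {(η_i, ρ_i)}_{i=1}^n be a multipartite quantum state ensemble and fix x. If η_x ρ_x − η_i ρ_i is block positive for all i = 1,…,n, then for every separable measurement {M_i}_{i=1}^n (each M_i separable, Σ_i M_i = 1) the success probability Σ_i η_i Tr(ρ_i M_i) is at most η_x; hence p_SEP(E) = η_x. -/
/-!
For a measurement with `∑ i, M i = 1` and `Tr ρ_x = 1`,
`η_x - ∑ i, η_i Tr(ρ_i M_i) = ∑ i, Tr[(η_x ρ_x - η_i ρ_i) M_i]`, and block positivity makes every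
term on the right nonnegative once it is known on all separable operators, not only on separable
states. That extension holds term by term: a product `⊗ₖ A k` of positive semidefinite factors
either has a factor of trace zero, hence vanishes, or is `∏ₖ Tr(A k)` times the separable state
`⊗ₖ (A k / Tr(A k))`. The bound `η_x` is attained by the separable measurement `M = Pi.single x 1`
that always guesses `x`.
-/

open Matrix BigOperators ComplexOrder

noncomputable section

/-- Tensor product of a family of local operators, one per party/step. -/
def tensorFam {m : ℕ} {ι : Fin m → Type*} [∀ k, Fintype (ι k)]
    (A : (k : Fin m) → Matrix (ι k) (ι k) ℂ) :
    Matrix ((k : Fin m) → ι k) ((k : Fin m) → ι k) ℂ :=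
  Matrix.of fun i j => ∏ k, A k (i k) (j k)

/-- Separable operator: a sum of tensor products of positive semidefinite local operators. -/
def IsSep {m : ℕ} {ι : Fin m → Type*} [∀ k, Fintype (ι k)]
    (E : Matrix ((k : Fin m) → ι k) ((k : Fin m) → ι k) ℂ) : Prop :=
  ∃ (S : Finset ℕ) (A : ℕ → (k : Fin m) → Matrix (ι k) (ι k) ℂ),
    (∀ s ∈ S, ∀ k, (A s k).PosSemidef) ∧ E = ∑ s ∈ S, tensorFam (A s)

/-- Separable state: separable with trace one. -/
def IsSepState {m : ℕ} {ι : Fin m → Type*} [∀ k, Fintype (ι k)]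
    (σ : Matrix ((k : Fin m) → ι k) ((k : Fin m) → ι k) ℂ) : Prop :=
  IsSep σ ∧ σ.trace = 1

/-- Block positive: nonnegative mean value on every separable state. -/
def IsBlockPos {m : ℕ} {ι : Fin m → Type*} [∀ k, Fintype (ι k)]
    (E : Matrix ((k : Fin m) → ι k) ((k : Fin m) → ι k) ℂ) : Prop :=
  ∀ σ, IsSepState σ → 0 ≤ ((E * σ).trace).re

def IsPOVM {α N : Type*} [Fintype α] [Fintype N] [DecidableEq N]
    (M : α → Matrix N N ℂ) : Prop :=
  (∀ i, (M i).PosSemidef) ∧ ∑ i, M i = 1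

/-- Average success probability of a guessing strategy. -/
def succProb {α N : Type*} [Fintype α] [Fintype N]
    (η : α → ℝ) (ρ M : α → Matrix N N ℂ) : ℝ :=
  ∑ i, η i * ((ρ i * M i).trace).re


lemma Complex.re_mul_nonneg_of_nonneg {c z : ℂ} (hc : 0 ≤ c) (hz : 0 ≤ z.re) :
    0 ≤ (c * z).re := by
  obtain ⟨hre, him⟩ := Complex.nonneg_iff.mp hc
  rw [Complex.mul_re, ← him, zero_mul, sub_zero]
  exact mul_nonneg hre hz

section Tensor

variable {m : ℕ} {ι : Fin m → Type*} [∀ k, Fintype (ι k)]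

lemma tensorFam_trace (A : (k : Fin m) → Matrix (ι k) (ι k) ℂ) :
    (tensorFam A).trace = ∏ k, (A k).trace := by
  simp only [Matrix.trace, Matrix.diag, Finset.prod_univ_sum, Fintype.piFinset_univ]
  rfl

lemma tensorFam_smul (c : Fin m → ℂ) (A : (k : Fin m) → Matrix (ι k) (ι k) ℂ) :
    tensorFam (fun k => c k • A k) = (∏ k, c k) • tensorFam A := by
  ext i j
  simp [tensorFam, Finset.prod_mul_distrib]

lemma tensorFam_eq_zero_of_eq_zero {A : (k : Fin m) → Matrix (ι k) (ι k) ℂ} {k : Fin m}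
    (hk : A k = 0) : tensorFam A = 0 := by
  ext i j
  exact Finset.prod_eq_zero (Finset.mem_univ k) (by simp [hk])

lemma tensorFam_one [∀ k, DecidableEq (ι k)] :
    tensorFam (fun k => (1 : Matrix (ι k) (ι k) ℂ)) = 1 := by
  ext i j
  by_cases h : i = j
  · subst h
    simp [tensorFam]
  · obtain ⟨k, hk⟩ : ∃ k, i k ≠ j k := Function.ne_iff.mp h
    rw [Matrix.one_apply_ne h]
    exact Finset.prod_eq_zero (Finset.mem_univ k) (by simp [hk])

lemma isSep_zero : IsSep (0 : Matrix ((k : Fin m) → ι k) ((k : Fin m) → ι k) ℂ) :=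
  ⟨∅, fun _ _ => 0, by simp, by simp⟩

lemma isSep_tensorFam {A : (k : Fin m) → Matrix (ι k) (ι k) ℂ} (hA : ∀ k, (A k).PosSemidef) :
    IsSep (tensorFam A) :=
  ⟨{0}, fun _ => A, fun _ _ => hA, by simp⟩

lemma isSep_one [∀ k, DecidableEq (ι k)] :
    IsSep (1 : Matrix ((k : Fin m) → ι k) ((k : Fin m) → ι k) ℂ) :=
  tensorFam_one (ι := ι) ▸ isSep_tensorFam fun _ => Matrix.PosSemidef.one

lemma isSepState_tensorFam {A : (k : Fin m) → Matrix (ι k) (ι k) ℂ}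
    (hA : ∀ k, (A k).PosSemidef ∧ (A k).trace = 1) : IsSepState (tensorFam A) :=
  ⟨isSep_tensorFam fun k => (hA k).1, by simp [tensorFam_trace, hA]⟩

lemma isSep_pi_single {α : Type*} [DecidableEq α] [∀ k, DecidableEq (ι k)] (x i : α) :
    IsSep ((Pi.single x 1 : α → Matrix ((k : Fin m) → ι k) ((k : Fin m) → ι k) ℂ) i) := by
  rcases eq_or_ne i x with rfl | h
  · simpa using isSep_one
  · simpa [h] using isSep_zero

lemma IsBlockPos.re_trace_mul_tensorFam_nonneg
    {H : Matrix ((k : Fin m) → ι k) ((k : Fin m) → ι k) ℂ} (hH : IsBlockPos H)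
    {A : (k : Fin m) → Matrix (ι k) (ι k) ℂ} (hA : ∀ k, (A k).PosSemidef) :
    0 ≤ (H * tensorFam A).trace.re := by
  by_cases hzero : ∃ k, (A k).trace = 0
  · obtain ⟨k, hk⟩ := hzero
    simp [tensorFam_eq_zero_of_eq_zero ((hA k).trace_eq_zero_iff.mp hk)]
  push Not at hzero
  set t := fun k => (A k).trace
  have hstate : IsSepState (tensorFam fun k => (t k)⁻¹ • A k) := isSepState_tensorFam fun k =>
    ⟨(hA k).smul (inv_nonneg_of_nonneg (hA k).trace_nonneg),
      by rw [Matrix.trace_smul, smul_eq_mul, inv_mul_cancel₀ (hzero k)]⟩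
  have hA_eq : tensorFam A = (∏ k, t k) • tensorFam fun k => (t k)⁻¹ • A k := by
    rw [← tensorFam_smul]
    congr 1
    funext k
    rw [smul_smul, mul_inv_cancel₀ (hzero k), one_smul]
  rw [hA_eq, Matrix.mul_smul, Matrix.trace_smul, smul_eq_mul]
  exact Complex.re_mul_nonneg_of_nonneg
    (Finset.prod_nonneg fun k _ => (hA k).trace_nonneg) (hH _ hstate)

lemma IsBlockPos.re_trace_mul_nonneg {H E : Matrix ((k : Fin m) → ι k) ((k : Fin m) → ι k) ℂ}
    (hH : IsBlockPos H) (hE : IsSep E) : 0 ≤ (H * E).trace.re := by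
  obtain ⟨S, A, hA, rfl⟩ := hE
  rw [Matrix.mul_sum, Matrix.trace_sum, Complex.re_sum]
  exact Finset.sum_nonneg fun s hs => hH.re_trace_mul_tensorFam_nonneg (hA s hs)

end Tensor

section Discrimination

variable {α N : Type*} [Fintype α] [Fintype N]

lemma succProb_add_sum_re_trace_sub (η : α → ℝ) {ρ M : α → Matrix N N ℂ} [DecidableEq N] (x : α)
    (hM : ∑ i, M i = 1) (hρx : (ρ x).trace = 1) :
    succProb η ρ M + ∑ i, (((η x : ℂ) • ρ x - (η i : ℂ) • ρ i) * M i).trace.re = η x := by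
  have hρxM : ∑ i, (ρ x * M i).trace.re = 1 := by
    rw [← Complex.re_sum, ← Matrix.trace_sum, ← Matrix.mul_sum, hM, Matrix.mul_one, hρx,
      Complex.one_re]
  simp only [Matrix.sub_mul, Matrix.smul_mul, Matrix.trace_sub, Matrix.trace_smul, smul_eq_mul,
    Complex.sub_re, Complex.re_ofReal_mul, Finset.sum_sub_distrib, ← Finset.mul_sum, hρxM]
  simp [succProb]

lemma succProb_le_of_re_trace_sub_nonneg {η : α → ℝ} {ρ M : α → Matrix N N ℂ} [DecidableEq N]
    {x : α} (hM : ∑ i, M i = 1) (hρx : (ρ x).trace = 1)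
    (hpos : ∀ i, 0 ≤ (((η x : ℂ) • ρ x - (η i : ℂ) • ρ i) * M i).trace.re) :
    succProb η ρ M ≤ η x := by
  have := succProb_add_sum_re_trace_sub η x hM hρx
  have := Finset.sum_nonneg fun i (_ : i ∈ Finset.univ) => hpos i
  linarith

lemma isPOVM_pi_single [DecidableEq α] [DecidableEq N] (x : α) :
    IsPOVM (Pi.single x (1 : Matrix N N ℂ)) := by
  refine ⟨fun i => ?_, by simp [Finset.sum_pi_single']⟩
  rcases eq_or_ne i x with rfl | h
  · simpa using Matrix.PosSemidef.one
  · simpa [h] using Matrix.PosSemidef.zero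

lemma succProb_pi_single_one [DecidableEq α] [DecidableEq N] (η : α → ℝ)
    {ρ : α → Matrix N N ℂ} {x : α} (hρx : (ρ x).trace = 1) :
    succProb η ρ (Pi.single x 1) = η x := by
  rw [succProb, Finset.sum_eq_single x (fun i _ h => by simp [h]) (by simp)]
  simp [hρx]

end Discrimination

theorem psep_eq_of_blockpos_general {m : ℕ} {ι : Fin m → Type*}
    [∀ k, Fintype (ι k)] [∀ k, DecidableEq (ι k)] {n : ℕ}
    (η : Fin n → ℝ) (ρ : Fin n → Matrix ((k : Fin m) → ι k) ((k : Fin m) → ι k) ℂ)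
    (hρ : ∀ i, (ρ i).PosSemidef ∧ (ρ i).trace = 1)
    (x : Fin n)
    (hbp : ∀ i, IsBlockPos ((η x : ℂ) • ρ x - (η i : ℂ) • ρ i)) :
    (∀ M : Fin n → Matrix ((k : Fin m) → ι k) ((k : Fin m) → ι k) ℂ,
      IsPOVM M → (∀ i, IsSep (M i)) → succProb η ρ M ≤ η x) ∧
    IsLUB ((fun M => succProb η ρ M) ''
      {M | IsPOVM M ∧ ∀ i, IsSep (M i)}) (η x) := by
  have hle : ∀ M : Fin n → Matrix ((k : Fin m) → ι k) ((k : Fin m) → ι k) ℂ,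
      IsPOVM M → (∀ i, IsSep (M i)) → succProb η ρ M ≤ η x := fun M hM hsep =>
    succProb_le_of_re_trace_sub_nonneg hM.2 (hρ x).2 fun i => (hbp i).re_trace_mul_nonneg (hsep i)
  refine ⟨hle, IsGreatest.isLUB ⟨⟨Pi.single x 1, ⟨isPOVM_pi_single x, isSep_pi_single x⟩,
    succProb_pi_single_one η (hρ x).2⟩, ?_⟩⟩
  rintro _ ⟨M, ⟨hM, hsep⟩, rfl⟩
  exact hle M hM hsep

/-- if η_x ρ_x − η_i ρ_i is block positive for all i, then every separable
measurement has success probability at most η_x, and hence p_SEP(E) = η_x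
(η_x is the least upper bound of success probabilities over separable POVMs). -/
theorem psep_eq_of_blockpos {m : ℕ} {ι : Fin m → Type*}
    [∀ k, Fintype (ι k)] [∀ k, DecidableEq (ι k)] {n : ℕ}
    (η : Fin n → ℝ) (ρ : Fin n → Matrix ((k : Fin m) → ι k) ((k : Fin m) → ι k) ℂ)
    (hη : ∀ i, 0 < η i) (hsum : ∑ i, η i = 1)
    (hρ : ∀ i, (ρ i).PosSemidef ∧ (ρ i).trace = 1)
    (x : Fin n)
    (hbp : ∀ i, IsBlockPos ((η x : ℂ) • ρ x - (η i : ℂ) • ρ i)) :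
    (∀ M : Fin n → Matrix ((k : Fin m) → ι k) ((k : Fin m) → ι k) ℂ,
      IsPOVM M → (∀ i, IsSep (M i)) → succProb η ρ M ≤ η x) ∧
    IsLUB ((fun M => succProb η ρ M) ''
      {M | IsPOVM M ∧ ∀ i, IsSep (M i)}) (η x) :=
  psep_eq_of_blockpos_general η ρ hρ x hbp

end
end

section
/- The optimal LOCC discrimination of the two-state m-qudit ensemble E = {(η_1, ρ_1), (η_2, ρ_2)} with η_1 = 2d^m/(d+3d^m), ρ_1 = (1/(2d^m))(1 + d^m Φ_d^m), η_2 = (d+d^m)/(d+3d^m), ρ_2 = Φ_d^m equals η_1 = 2d^m/(d+3d^m), because η_1ρ_1 − η_2ρ_2 = (1/(d+3d^m))(1 − dΦ_d^m) is block positive. -/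
/-!
Let M be the measurement operator for guessing ρ₂. Since tr ρ₁ = 1, the success probability is
η₁ − tr((η₁ρ₁ − η₂ρ₂)M), and η₁ρ₁ − η₂ρ₂ is a positive multiple of 1 − dΦ. As M is separable, it
suffices that tr((1 − dΦ)σ) ≥ 0 for every product σ = ⊗ₖ Aₖ of positive semidefinite Aₖ.
Here tr σ = ∏ₖ Σₐ (Aₖ)ₐₐ, while d tr(Φσ) = Σₐ,ᵦ ∏ₖ (Aₖ)ᵦₐ. Bounding |(Aₖ)ᵦₐ| by
√((Aₖ)ₐₐ (Aₖ)ᵦᵦ) gives d tr(Φσ) ≤ (Σₐ ∏ₖ √(Aₖ)ₐₐ)², and Cauchy–Schwarz in one tensor factor bounds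
this by ∏ₖ Σₐ (Aₖ)ₐₐ as soon as m ≥ 2. The measurement that always guesses ρ₁ attains η₁.
-/

open Matrix BigOperators ComplexOrder

noncomputable section

/-- The m-qudit GHZ state Φ_d^m = (1/d) Σ_{a,b} |a⋯a⟩⟨b⋯b|. -/
def ghz (m d : ℕ) : Matrix ((_ : Fin m) → Fin d) ((_ : Fin m) → Fin d) ℂ :=
  Matrix.of fun i j =>
    if (∀ k k', i k = i k') ∧ (∀ k k', j k = j k') then (d : ℂ)⁻¹ else 0

lemma Finset.sum_prod_le_prod_sum {ι κ : Type*} [Fintype κ] {s : Finset ι} (hs : s.Nonempty)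
    (u : ι → κ → ℝ) (hu : ∀ k a, 0 ≤ u k a) :
    ∑ a, ∏ k ∈ s, u k a ≤ ∏ k ∈ s, ∑ a, u k a := by
  induction hs using Finset.Nonempty.cons_induction with
  | singleton k => simp
  | cons k s hk hs ih =>
    simp only [Finset.prod_cons]
    calc ∑ a, u k a * ∏ j ∈ s, u j a
        ≤ ∑ a, u k a * ∑ b, ∏ j ∈ s, u j b := by
          gcongr with a
          · exact hu k a
          · exact Finset.single_le_sum (fun b _ => Finset.prod_nonneg fun j _ => hu j b)
              (Finset.mem_univ a)
      _ = (∑ a, u k a) * ∑ b, ∏ j ∈ s, u j b := by rw [Finset.sum_mul]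
      _ ≤ (∑ a, u k a) * ∏ j ∈ s, ∑ b, u j b := by
          gcongr
          exact Finset.sum_nonneg fun a _ => hu k a

lemma Finset.sq_sum_prod_le_prod_sum_sq {ι κ : Type*} [DecidableEq ι] [Fintype κ]
    {s : Finset ι} (hs : 1 < s.card) (x : ι → κ → ℝ) :
    (∑ a, ∏ k ∈ s, x k a) ^ 2 ≤ ∏ k ∈ s, ∑ a, x k a ^ 2 := by
  obtain ⟨k₀, hk₀⟩ := Finset.card_pos.mp (by omega : 0 < s.card)
  have hrest : (s.erase k₀).Nonempty := by
    rw [← Finset.card_pos, Finset.card_erase_of_mem hk₀]; omega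
  simp only [← Finset.mul_prod_erase s _ hk₀]
  calc (∑ a, x k₀ a * ∏ k ∈ s.erase k₀, x k a) ^ 2
      ≤ (∑ a, x k₀ a ^ 2) * ∑ a, (∏ k ∈ s.erase k₀, x k a) ^ 2 :=
        Finset.sum_mul_sq_le_sq_mul_sq _ _ _
    _ ≤ (∑ a, x k₀ a ^ 2) * ∏ k ∈ s.erase k₀, ∑ a, x k a ^ 2 := by
        simp only [← Finset.prod_pow]
        gcongr
        exact sum_prod_le_prod_sum hrest _ fun k a => sq_nonneg _

lemma Matrix.PosSemidef.norm_apply_le {n : Type*} [Fintype n] [DecidableEq n]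
    {A : Matrix n n ℂ} (hA : A.PosSemidef) (a b : n) :
    ‖A a b‖ ≤ √(A a a).re * √(A b b).re := by
  have hminor := (hA.submatrix ![a, b]).det_nonneg
  rw [Matrix.det_fin_two] at hminor
  simp only [Matrix.submatrix_apply, Matrix.cons_val_zero, Matrix.cons_val_one,
    sub_nonneg] at hminor
  rw [← hA.isHermitian.apply b a, Complex.star_def, Complex.mul_conj,
    ← hA.isHermitian.coe_re_apply_self a, ← hA.isHermitian.coe_re_apply_self b] at hminor
  have hsq : ‖A a b‖ ^ 2 ≤ (A a a).re * (A b b).re := by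
    rw [Complex.sq_norm]
    simpa using (Complex.le_def.mp hminor).1
  rw [← Real.sqrt_mul (Complex.nonneg_iff.mp hA.diag_nonneg).1, ← Real.sqrt_sq (norm_nonneg _)]
  exact Real.sqrt_le_sqrt hsq

lemma Fintype.sum_ite_constant_eq_sum_const {m : ℕ} {α M : Type*} [Fintype α] [DecidableEq α]
    [AddCommMonoid M] (hm : 0 < m) (f : (Fin m → α) → M) :
    ∑ i : Fin m → α, (if ∀ k k', i k = i k' then f i else 0) = ∑ a, f (fun _ => a) := by
  have : Nonempty (Fin m) := Fin.pos_iff_nonempty.mp hm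
  have hconst : Finset.univ.filter (fun i : Fin m → α => ∀ k k', i k = i k')
      = Finset.univ.map ⟨Function.const (Fin m), Function.const_injective⟩ := by
    ext i
    simp only [Finset.mem_filter, Finset.mem_univ, true_and, Finset.mem_map,
      Function.Embedding.coeFn_mk]
    refine ⟨fun h => ⟨i ⟨0, hm⟩, funext fun k => h ⟨0, hm⟩ k⟩, ?_⟩
    rintro ⟨a, rfl⟩ k k'
    rfl
  rw [← Finset.sum_filter, hconst, Finset.sum_map]
  rfl

lemma trace_ghz_mul {m d : ℕ} (hm : 0 < m) (X : Matrix (Fin m → Fin d) (Fin m → Fin d) ℂ) :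
    (ghz m d * X).trace = (d : ℂ)⁻¹ * ∑ a : Fin d, ∑ b : Fin d, X (fun _ => b) (fun _ => a) := by
  simp only [Matrix.trace, Matrix.diag, Matrix.mul_apply, ghz, Matrix.of_apply, ite_and,
    ite_mul, zero_mul, Finset.mul_sum, Finset.sum_ite_irrel, Finset.sum_const_zero,
    Fintype.sum_ite_constant_eq_sum_const hm]

lemma trace_ghz {m d : ℕ} (hm : 0 < m) (hd : d ≠ 0) : (ghz m d).trace = 1 := by
  rw [← Matrix.mul_one (ghz m d), trace_ghz_mul hm]
  have : Nonempty (Fin m) := Fin.pos_iff_nonempty.mp hm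
  have hconst (a b : Fin d) : ((fun _ : Fin m => b) = fun _ => a) ↔ b = a := Function.const_inj
  simp [Matrix.one_apply, hconst, hd]

lemma trace_tensorFam {m : ℕ} {ι : Fin m → Type*} [∀ k, Fintype (ι k)]
    (A : (k : Fin m) → Matrix (ι k) (ι k) ℂ) :
    (tensorFam A).trace = ∏ k, (A k).trace := by
  simp only [Matrix.trace, Matrix.diag, tensorFam, Matrix.of_apply, Finset.prod_univ_sum,
    Fintype.piFinset_univ]

lemma re_trace_one_sub_smul_ghz_mul_tensorFam_nonneg {m d : ℕ} (hm : 2 ≤ m) (hd : d ≠ 0)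
    (A : Fin m → Matrix (Fin d) (Fin d) ℂ) (hA : ∀ k, (A k).PosSemidef) :
    0 ≤ (((1 - (d : ℂ) • ghz m d) * tensorFam A).trace).re := by
  set x : Fin m → Fin d → ℝ := fun k a => √(A k a a).re
  have hx (k : Fin m) (a : Fin d) : A k a a = ((x k a ^ 2 : ℝ) : ℂ) := by
    rw [Real.sq_sqrt (Complex.nonneg_iff.mp (hA k).diag_nonneg).1,
      Complex.conj_eq_iff_re.mp ((hA k).isHermitian.apply a a)]
  have htrace : ((tensorFam A).trace).re = ∏ k, ∑ a, x k a ^ 2 := by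
    rw [trace_tensorFam]
    simp only [Matrix.trace, Matrix.diag, hx]
    norm_cast
  have hghz : ((d : ℂ) * (ghz m d * tensorFam A).trace).re
      = ∑ a, ∑ b, (∏ k, A k b a).re := by
    rw [trace_ghz_mul (by omega), ← mul_assoc, mul_inv_cancel₀ (Nat.cast_ne_zero.mpr hd), one_mul]
    simp only [tensorFam, Matrix.of_apply, Complex.re_sum]
  have hentry (a b : Fin d) : (∏ k, A k b a).re ≤ (∏ k, x k b) * ∏ k, x k a := by
    rw [← Finset.prod_mul_distrib]
    calc (∏ k, A k b a).re ≤ ‖∏ k, A k b a‖ := Complex.re_le_norm _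
      _ = ∏ k, ‖A k b a‖ := norm_prod _ _
      _ ≤ ∏ k, x k b * x k a :=
        Finset.prod_le_prod (fun k _ => norm_nonneg _) fun k _ => (hA k).norm_apply_le b a
  rw [sub_mul, one_mul, Matrix.trace_sub, Complex.sub_re, smul_mul_assoc, Matrix.trace_smul,
    smul_eq_mul, hghz, htrace, sub_nonneg]
  calc ∑ a, ∑ b, (∏ k, A k b a).re
      ≤ ∑ a, ∑ b, (∏ k, x k b) * ∏ k, x k a := by gcongr with a _ b; exact hentry a b
    _ = (∑ a, ∏ k, x k a) ^ 2 := by rw [sq, Finset.sum_mul_sum]; exact Finset.sum_comm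
    _ ≤ ∏ k, ∑ a, x k a ^ 2 :=
        Finset.sq_sum_prod_le_prod_sum_sq (by rw [Finset.card_univ, Fintype.card_fin]; omega) x

lemma IsSep.re_trace_mul_nonneg {m : ℕ} {ι : Fin m → Type*} [∀ k, Fintype (ι k)]
    {W E : Matrix ((k : Fin m) → ι k) ((k : Fin m) → ι k) ℂ}
    (hW : ∀ A : (k : Fin m) → Matrix (ι k) (ι k) ℂ, (∀ k, (A k).PosSemidef) →
      0 ≤ ((W * tensorFam A).trace).re)
    (hE : IsSep E) : 0 ≤ ((W * E).trace).re := by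
  obtain ⟨S, A, hA, rfl⟩ := hE
  rw [Matrix.mul_sum, Matrix.trace_sum, Complex.re_sum]
  exact Finset.sum_nonneg fun s hs => hW (A s) (hA s hs)

lemma succProb_eq_sub_of_sum_eq_one {N : Type*} [Fintype N] [DecidableEq N]
    (η : Fin 2 → ℝ) (ρ M : Fin 2 → Matrix N N ℂ) (hM : ∑ i, M i = 1) (hρ : (ρ 0).trace = 1) :
    succProb η ρ M = η 0 - ((((η 0 : ℂ) • ρ 0 - (η 1 : ℂ) • ρ 1) * M 1).trace).re := by
  rw [Fin.sum_univ_two, ← eq_sub_iff_add_eq] at hM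
  simp only [succProb, Fin.sum_univ_two, hM, Matrix.mul_sub, Matrix.mul_one, Matrix.sub_mul,
    Matrix.smul_mul, Matrix.trace_sub, Matrix.trace_smul, hρ, smul_eq_mul, Complex.sub_re,
    Complex.re_ofReal_mul, Complex.one_re]
  ring

lemma trace_one_add_smul_ghz {m d : ℕ} (hm : 0 < m) (hd : d ≠ 0) :
    ((2 * (d : ℂ) ^ m)⁻¹ • (1 + ((d : ℂ) ^ m) • ghz m d)).trace = 1 := by
  simp only [Matrix.trace_smul, Matrix.trace_add, Matrix.trace_one, trace_ghz hm hd,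
    Fintype.card_pi, Fintype.card_fin, Finset.prod_const, Finset.card_univ, smul_eq_mul]
  push_cast
  field_simp
  ring

/-- for the two-state m-qudit ensemble of Example 1,
η_1ρ_1 − η_2ρ_2 = (1/(d+3d^m))(1 − dΦ_d^m), and the optimal LOCC discrimination
probability equals η_1 = 2d^m/(d+3d^m). -/
theorem example_two_state_locc (m d : ℕ) (hm : 2 ≤ m) (hd : 2 ≤ d)
    (η : Fin 2 → ℝ) (ρ : Fin 2 → Matrix ((_ : Fin m) → Fin d) ((_ : Fin m) → Fin d) ℂ)
    (hη0 : η 0 = 2 * (d : ℝ) ^ m / ((d : ℝ) + 3 * (d : ℝ) ^ m))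
    (hη1 : η 1 = ((d : ℝ) + (d : ℝ) ^ m) / ((d : ℝ) + 3 * (d : ℝ) ^ m))
    (hρ0 : ρ 0 = (2 * (d : ℂ) ^ m)⁻¹ • (1 + ((d : ℂ) ^ m) • ghz m d))
    (hρ1 : ρ 1 = ghz m d)
    -- a class of LOCC measurements: separable POVMs containing the trivial guesses
    (C : Set (Fin 2 → Matrix ((_ : Fin m) → Fin d) ((_ : Fin m) → Fin d) ℂ))
    (hC : ∀ M ∈ C, IsPOVM M ∧ ∀ i, IsSep (M i))
    (htriv : ∀ x : Fin 2,
      (fun i => if i = x then (1 : Matrix ((_ : Fin m) → Fin d) ((_ : Fin m) → Fin d) ℂ) else 0) ∈ C)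
    (pL : ℝ) (hpL : IsLUB ((fun M => succProb η ρ M) '' C) pL) :
    ((η 0 : ℂ) • ρ 0 - (η 1 : ℂ) • ρ 1
        = ((d : ℂ) + 3 * (d : ℂ) ^ m)⁻¹ • (1 - (d : ℂ) • ghz m d)) ∧
    pL = 2 * (d : ℝ) ^ m / ((d : ℝ) + 3 * (d : ℝ) ^ m) := by
  have hdiff : (η 0 : ℂ) • ρ 0 - (η 1 : ℂ) • ρ 1
      = ((d : ℂ) + 3 * (d : ℂ) ^ m)⁻¹ • (1 - (d : ℂ) • ghz m d) := by
    ext i j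
    simp only [hρ0, hρ1, hη0, hη1, Matrix.sub_apply, Matrix.smul_apply, Matrix.add_apply,
      Matrix.one_apply, ghz, Matrix.of_apply, smul_eq_mul]
    push_cast
    split_ifs <;> field_simp <;> ring
  have htr : (ρ 0).trace = 1 := hρ0 ▸ trace_one_add_smul_ghz (by omega) (by omega)
  refine ⟨hdiff, hη0 ▸ hpL.unique (IsGreatest.isLUB ⟨⟨_, htriv 0, ?_⟩, ?_⟩)⟩
  · dsimp only
    rw [succProb_eq_sub_of_sum_eq_one _ _ _ (by simp) htr]
    simp
  · rintro _ ⟨M, hM, rfl⟩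
    obtain ⟨⟨-, hsum⟩, hsep⟩ := hC M hM
    have hblock := (hsep 1).re_trace_mul_nonneg
      (re_trace_one_sub_smul_ghz_mul_tensorFam_nonneg hm (by omega))
    dsimp only
    rw [succProb_eq_sub_of_sum_eq_one _ _ _ hsum htr, hdiff, Matrix.smul_mul, Matrix.trace_smul,
      smul_eq_mul, show ((d : ℂ) + 3 * (d : ℂ) ^ m)⁻¹ = (((d + 3 * d ^ m : ℕ) : ℝ)⁻¹ : ℝ) by
        push_cast; rfl, Complex.re_ofReal_mul]
    simp only [sub_le_self_iff]
    positivity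
end
end
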